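/- Let P be a DPAG and i → j a directed edge in P that is definitely visible in P. Then for every directed mixed graph G contained in P, there exists no inducing walk between i and j in G that is into i. -/
import Mathlib


namespace CausalGraphs

variable {V : Type*}

/-- A directed mixed graph (DMG): directed edges `dir` (`i → j`) and
bidirected edges `bi` (`i ↔ j`), with no self-loops. -/
structure DMG (V : Type*) where
  dir : V → V → Prop
  bi : V → V → Prop
  dir_irrefl : ∀ i, ¬ dir i i
  bi_irrefl : ∀ i, ¬ bi i i

namespace DMG

/-- `G.Anc i j`: `i ∈ an(G, j)`, i.e. there is a (possibly trivial) directed path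
from `i` to `j` in `G`. -/
def Anc (G : DMG V) (i j : V) : Prop :=
  Relation.ReflTransGen G.dir i j

/-- `G.Scc i j`: `i ∈ scc(G, j)`, i.e. `i` and `j` lie in the same strongly
connected component of `G`. -/
def Scc (G : DMG V) (i j : V) : Prop :=
  G.Anc i j ∧ G.Anc j i

/-- There is a bidirected edge between `i` and `j` (bidirected edges are unordered). -/
def BiEdge (G : DMG V) (i j : V) : Prop :=
  G.bi i j ∨ G.bi j i

/-- `G` has no directed cycle (i.e. `G` is an ADMG). -/
def Acyclic (G : DMG V) : Prop :=
  ∀ i j, G.dir i j → ¬ G.Anc j i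

end DMG

/-- A walk of length `len` is recorded by its vertices `vert 0, …, vert len` and,
for each edge index `k < len`, the edge marks: `intoL k` (resp. `intoR k`) is `true`
iff the `k`-th edge has an arrowhead at `vert k` (resp. at `vert (k+1)`). -/
structure Walk (V : Type*) where
  len : ℕ
  vert : ℕ → V
  intoL : ℕ → Bool
  intoR : ℕ → Bool

namespace Walk

def first (w : Walk V) : V := w.vert 0

def last (w : Walk V) : V := w.vert w.len

/-- The walk is an actual walk in a DMG `G`: each step traverses a directed edge
(in either direction) or a bidirected edge of `G`, with the corresponding marks. -/
def ValidOn (G : DMG V) (w : Walk V) : Prop :=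
  ∀ k, k < w.len →
    (w.intoL k = false ∧ w.intoR k = true ∧ G.dir (w.vert k) (w.vert (k+1))) ∨
    (w.intoL k = true ∧ w.intoR k = false ∧ G.dir (w.vert (k+1)) (w.vert k)) ∨
    (w.intoL k = true ∧ w.intoR k = true ∧ G.BiEdge (w.vert k) (w.vert (k+1)))

/-- `k` is a non-endpoint position of the walk. -/
def Interior (w : Walk V) (k : ℕ) : Prop := 0 < k ∧ k < w.len

/-- The non-endpoint node `vert k` is a collider on the walk: both adjacent
edges have an arrowhead at it. -/
def ColliderAt (w : Walk V) (k : ℕ) : Prop :=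
  w.Interior k ∧ w.intoR (k-1) = true ∧ w.intoL k = true

/-- The non-endpoint node `vert k` is a non-collider on the walk. -/
def NonColliderAt (w : Walk V) (k : ℕ) : Prop :=
  w.Interior k ∧ ¬ (w.intoR (k-1) = true ∧ w.intoL k = true)

/-- The edge on the first-endpoint side of position `k` is directed out of
`vert k`, pointing to the neighbour `vert (k-1)` on the walk. -/
def PointsLeft (w : Walk V) (k : ℕ) : Prop :=
  w.intoL (k-1) = true ∧ w.intoR (k-1) = false

/-- The edge on the last-endpoint side of position `k` is directed out of
`vert k`, pointing to the neighbour `vert (k+1)` on the walk. -/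
def PointsRight (w : Walk V) (k : ℕ) : Prop :=
  w.intoL k = false ∧ w.intoR k = true

/-- The walk is a path: all its vertices are distinct. -/
def IsPath (w : Walk V) : Prop :=
  ∀ a, a ≤ w.len → ∀ b, b ≤ w.len → w.vert a = w.vert b → a = b

/-- The walk is into its first node (arrowhead at the first node). -/
def IntoFirst (w : Walk V) : Prop := 0 < w.len ∧ w.intoL 0 = true

/-- The walk is into its last node (arrowhead at the last node). -/
def IntoLast (w : Walk V) : Prop := 0 < w.len ∧ w.intoR (w.len - 1) = true

/-- The walk is σ-blocked by the set `C`. -/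
def SigmaBlocked (G : DMG V) (w : Walk V) (C : Set V) : Prop :=
  w.first ∈ C ∨ w.last ∈ C ∨
  (∃ k, w.ColliderAt k ∧ ¬ ∃ c ∈ C, G.Anc (w.vert k) c) ∨
  (∃ k, w.NonColliderAt k ∧ w.vert k ∈ C ∧
    ((w.PointsLeft k ∧ ¬ G.Scc (w.vert k) (w.vert (k-1))) ∨
     (w.PointsRight k ∧ ¬ G.Scc (w.vert k) (w.vert (k+1)))))

/-- The walk is d-blocked by the set `C`. -/
def DBlocked (G : DMG V) (w : Walk V) (C : Set V) : Prop :=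
  w.first ∈ C ∨ w.last ∈ C ∨
  (∃ k, w.ColliderAt k ∧ ¬ ∃ c ∈ C, G.Anc (w.vert k) c) ∨
  (∃ k, w.NonColliderAt k ∧ w.vert k ∈ C)

/-- The walk is inducing: every collider on it is an ancestor of one of the two
endpoints, and every non-endpoint non-collider only has outgoing directed edges
to its neighbours on the walk that lie in the same strongly connected component. -/
def Inducing (G : DMG V) (w : Walk V) : Prop :=
  (∀ k, w.ColliderAt k → G.Anc (w.vert k) w.first ∨ G.Anc (w.vert k) w.last) ∧
  (∀ k, w.NonColliderAt k →
    (w.PointsLeft k → G.Scc (w.vert k) (w.vert (k-1))) ∧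
    (w.PointsRight k → G.Scc (w.vert k) (w.vert (k+1))))

end Walk

namespace DMG

/-- `A` and `B` are σ-separated given `C` in `G`. -/
def SigmaSep (G : DMG V) (A B C : Set V) : Prop :=
  ∀ w : Walk V, w.ValidOn G → w.first ∈ A → w.last ∈ B → w.SigmaBlocked G C

/-- `A` and `B` are d-separated given `C` in `G`. -/
def DSep (G : DMG V) (A B C : Set V) : Prop :=
  ∀ w : Walk V, w.ValidOn G → w.first ∈ A → w.last ∈ B → w.DBlocked G C

/-- Nodes `i` and `j` are σ-connected given `C` in `G`. -/
def SigmaConnected (G : DMG V) (i j : V) (C : Set V) : Prop :=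
  ∃ w : Walk V, w.ValidOn G ∧ w.first = i ∧ w.last = j ∧ ¬ w.SigmaBlocked G C

/-- The σ-independence model of `G`. -/
def IMsigma (G : DMG V) : Set (Set V × Set V × Set V) :=
  { t | G.SigmaSep t.1 t.2.1 t.2.2 }

/-- The d-independence model of `G`. -/
def IMd (G : DMG V) : Set (Set V × Set V × Set V) :=
  { t | G.DSep t.1 t.2.1 t.2.2 }

/-- There is an inducing walk between `i` and `j` in `G`. -/
def InducingWalk (G : DMG V) (i j : V) : Prop :=
  ∃ w : Walk V, w.ValidOn G ∧ w.first = i ∧ w.last = j ∧ w.Inducing G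

/-- There is an inducing path between `i` and `j` in `G`. -/
def InducingPath (G : DMG V) (i j : V) : Prop :=
  ∃ w : Walk V, w.ValidOn G ∧ w.first = i ∧ w.last = j ∧ w.IsPath ∧ w.Inducing G

/-- There is an inducing walk between `i` and `j` in `G` that is into `j`. -/
def InducingWalkIntoLast (G : DMG V) (i j : V) : Prop :=
  ∃ w : Walk V, w.ValidOn G ∧ w.first = i ∧ w.last = j ∧ w.Inducing G ∧ w.IntoLast

/-- There is an inducing walk between `i` and `j` in `G` that is into both `i` and `j`. -/
def InducingWalkIntoBoth (G : DMG V) (i j : V) : Prop :=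
  ∃ w : Walk V, w.ValidOn G ∧ w.first = i ∧ w.last = j ∧ w.Inducing G ∧ w.IntoFirst ∧ w.IntoLast

/-- `G'` is an acyclification of `G`. -/
def IsAcyclification (G G' : DMG V) : Prop :=
  G'.Acyclic ∧
  (∀ i j, ¬ G.Scc i j →
    ((G'.dir i j ↔ ∃ k, G.Scc k j ∧ G.dir i k) ∧
     (G'.bi i j ↔ ∃ k, G.Scc k j ∧ G.bi i k))) ∧
  (∀ i j, i ≠ j → G.Scc i j → (G'.dir i j ∨ G'.dir j i ∨ G'.bi i j))

end DMG

/-- Edge marks of a partial ancestral graph. -/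
inductive Mark : Type
  | tail
  | arrow
  | circle
deriving DecidableEq

/-- A directed partial ancestral graph (DPAG). `mark i j` is the edge mark at `j`
on the edge between `i` and `j` (only meaningful when `adj i j`). Allowed edge
types are `→`, `←`, `↔`, `∘→`, `←∘` and `∘—∘`; there are no directed and no
almost directed cycles. -/
structure DPAG (V : Type*) where
  adj : V → V → Prop
  mark : V → V → Mark
  adj_symm : ∀ i j, adj i j → adj j i
  adj_irrefl : ∀ i, ¬ adj i i
  tail_imp_arrow : ∀ i j, adj i j → mark j i = Mark.tail → mark i j = Mark.arrow
  no_directed_cycle : ∀ i, ¬ Relation.TransGen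
    (fun a b => adj a b ∧ mark a b = Mark.arrow ∧ mark b a = Mark.tail) i i
  no_almost_directed_cycle : ∀ i j, Relation.ReflTransGen
    (fun a b => adj a b ∧ mark a b = Mark.arrow ∧ mark b a = Mark.tail) i j →
    ¬ (adj i j ∧ mark i j = Mark.arrow ∧ mark j i = Mark.arrow)

/-- A directed edge `i → j` with respect to raw adjacency/mark data. -/
def DirEdgeOn (adj : V → V → Prop) (mark : V → V → Mark) (i j : V) : Prop :=
  adj i j ∧ mark i j = Mark.arrow ∧ mark j i = Mark.tail

/-- The directed edge `i → j` is definitely visible, with respect to raw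
adjacency/mark data: there is a node `k` not adjacent to `j` such that either
the edge between `k` and `i` is into `i`, or there is a path between `k` and `i`
that is into `i` on which every non-endpoint node is a collider and a parent of `j`. -/
def DefinitelyVisibleOn (adj : V → V → Prop) (mark : V → V → Mark) (i j : V) : Prop :=
  DirEdgeOn adj mark i j ∧
  ∃ k, ¬ adj k j ∧
    ((adj k i ∧ mark k i = Mark.arrow) ∨
     (∃ n, ∃ p : ℕ → V, 0 < n ∧ p 0 = k ∧ p n = i ∧
       (∀ a, a ≤ n → ∀ b, b ≤ n → p a = p b → a = b) ∧
       (∀ m, m < n → adj (p m) (p (m+1))) ∧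
       mark (p (n-1)) i = Mark.arrow ∧
       (∀ m, 0 < m → m < n →
         (mark (p (m-1)) (p m) = Mark.arrow ∧ mark (p (m+1)) (p m) = Mark.arrow) ∧
         DirEdgeOn adj mark (p m) j)))

namespace DPAG

/-- `i → j` in `P`. -/
def DirEdge (P : DPAG V) (i j : V) : Prop := DirEdgeOn P.adj P.mark i j

/-- `i ↔ j` in `P`. -/
def BiEdge (P : DPAG V) (i j : V) : Prop :=
  P.adj i j ∧ P.mark i j = Mark.arrow ∧ P.mark j i = Mark.arrow

/-- `i *→ j` in `P`: an edge between `i` and `j` with an arrowhead at `j`. -/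
def ArrowAt (P : DPAG V) (i j : V) : Prop := P.adj i j ∧ P.mark i j = Mark.arrow

/-- The directed edge `i → j` of `P` is definitely visible in `P`. -/
def DefinitelyVisible (P : DPAG V) (i j : V) : Prop :=
  DefinitelyVisibleOn P.adj P.mark i j

/-- The DPAG `P` contains the DMG `G`. -/
def Contains (P : DPAG V) (G : DMG V) : Prop :=
  (∀ i j, i ≠ j → (P.adj i j ↔ G.InducingPath i j)) ∧
  (∀ i j, P.ArrowAt i j → ¬ G.Anc j i) ∧
  (∀ i j, P.DirEdge i j → G.Anc i j)

/-- `p 0, …, p n` is a possibly directed path in `P`: consecutive vertices are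
adjacent, no edge has an arrowhead at the endpoint nearer `p 0`, and all
vertices are distinct. -/
def PossiblyDirectedPathOn (P : DPAG V) (n : ℕ) (p : ℕ → V) : Prop :=
  (∀ k, k < n → P.adj (p k) (p (k+1)) ∧ P.mark (p (k+1)) (p k) ≠ Mark.arrow) ∧
  (∀ a, a ≤ n → ∀ b, b ≤ n → p a = p b → a = b)

/-- The path `p 0, …, p n` is uncovered: every consecutive triple is unshielded. -/
def UncoveredOn (P : DPAG V) (n : ℕ) (p : ℕ → V) : Prop :=
  ∀ k, k + 2 ≤ n → ¬ P.adj (p k) (p (k+2))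

/-- There is a possibly directed path from `i` to `j` in `P`. -/
def PDPath (P : DPAG V) (i j : V) : Prop :=
  ∃ n, ∃ p : ℕ → V, p 0 = i ∧ p n = j ∧ P.PossiblyDirectedPathOn n p

end DPAG

/-- JCI Assumption 1 (exogeneity): no system variable causes any context variable
(`K` is the set of context nodes; its complement is the set of system nodes). -/
def JCI1 (G : DMG V) (K : Set V) : Prop :=
  ∀ i k, i ∉ K → k ∈ K → ¬ G.dir i k

/-- JCI Assumption 2 (randomization): no pair of a system and a context variable
is confounded. -/
def JCI2 (G : DMG V) (K : Set V) : Prop :=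
  ∀ i k, i ∉ K → k ∈ K → ¬ G.BiEdge i k

/-- JCI Assumption 3 (genericity): every pair of distinct context variables is
connected by a bidirected edge and by no directed edge. -/
def JCI3 (G : DMG V) (K : Set V) : Prop :=
  ∀ k k', k ∈ K → k' ∈ K → k ≠ k' → (G.bi k k' ∧ ¬ G.dir k k')

/-- An independence model on `V`: a set of triples of subsets of `V`. -/
abbrev IndepModel (V : Type*) := Set (Set V × Set V × Set V)

/-- Background knowledge `Ψ` is compatible with the acyclification. -/
def CompatibleWithAcyclification (Ψ : DMG V → Prop) : Prop :=
  ∀ G : DMG V, Ψ G →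
    (∃ G', G.IsAcyclification G' ∧ Ψ G') ∧
    (∀ i j : V, G.Anc i j → ∃ G', G.IsAcyclification G' ∧ Ψ G' ∧ G'.Anc i j) ∧
    (∀ i j : V, ¬ G.Anc i j → ∀ G', G.IsAcyclification G' → Ψ G' → ¬ G'.Anc i j)

/-! ### Auxiliary development for statement9 -/

section Aux

variable {G : DMG V} {w w1 w2 : Walk V}

lemma DMG.Anc.refl' (G : DMG V) (a : V) : G.Anc a a := Relation.ReflTransGen.refl

lemma anc_trans {a b c : V} (h1 : G.Anc a b) (h2 : G.Anc b c) : G.Anc a c :=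
  Relation.ReflTransGen.trans h1 h2

lemma scc_symm {a b : V} (h : G.Scc a b) : G.Scc b a := ⟨h.2, h.1⟩

namespace Walk

/-- From validity: an edge is never tail–tail. -/
lemma no_tail_tail (hv : w.ValidOn G) {k : ℕ} (hk : k < w.len)
    (h : w.intoL k = false) :
    w.intoR k = true ∧ G.dir (w.vert k) (w.vert (k+1)) := by
  rcases hv k hk with ⟨h1, h2, h3⟩ | ⟨h1, h2, h3⟩ | ⟨h1, h2, h3⟩ <;>
    simp_all

lemma no_tail_tail' (hv : w.ValidOn G) {k : ℕ} (hk : k < w.len)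
    (h : w.intoR k = false) :
    w.intoL k = true ∧ G.dir (w.vert (k+1)) (w.vert k) := by
  rcases hv k hk with ⟨h1, h2, h3⟩ | ⟨h1, h2, h3⟩ | ⟨h1, h2, h3⟩ <;>
    simp_all

/-! #### Reversal -/

/-- Reversal of a walk. -/
def rev (w : Walk V) : Walk V where
  len := w.len
  vert := fun m => w.vert (w.len - m)
  intoL := fun m => w.intoR (w.len - 1 - m)
  intoR := fun m => w.intoL (w.len - 1 - m)

@[simp] lemma rev_len : w.rev.len = w.len := rfl
@[simp] lemma rev_first : w.rev.first = w.last := by simp [rev, first, last]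
@[simp] lemma rev_last : w.rev.last = w.first := by simp [rev, first, last]

lemma rev_valid (hv : w.ValidOn G) : w.rev.ValidOn G := by
  intro k hk
  simp only [rev_len] at hk
  have h1 : w.len - 1 - k < w.len := by omega
  have e1 : w.len - k = (w.len - 1 - k) + 1 := by omega
  have e2 : w.len - (k + 1) = w.len - 1 - k := by omega
  rcases hv _ h1 with ⟨g1, g2, g3⟩ | ⟨g1, g2, g3⟩ | ⟨g1, g2, g3⟩
  · exact Or.inr (Or.inl (by simp [rev, e1, e2, g1, g2, g3]))
  · exact Or.inl (by simp [rev, e1, e2, g1, g2, g3])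
  · refine Or.inr (Or.inr ⟨by simp [rev, g2], by simp [rev, g1], ?_⟩)
    have v1 : w.rev.vert k = w.vert ((w.len - 1 - k) + 1) := by simp [rev, e1]
    have v2 : w.rev.vert (k+1) = w.vert (w.len - 1 - k) := by simp [rev, e2]
    rw [v1, v2]
    exact g3.elim (fun h => Or.inr h) (fun h => Or.inl h)

lemma rev_inducing (hind : w.Inducing G) : w.rev.Inducing G := by
  constructor
  · intro k hk
    obtain ⟨⟨hk0, hklen⟩, hcR, hcL⟩ := hk
    simp only [rev_len] at hklen
    set k0 := w.len - k with hk0def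
    have hc : w.ColliderAt k0 := by
      refine ⟨⟨by omega, by omega⟩, ?_, ?_⟩
      · have : w.len - 1 - k = k0 - 1 := by omega
        simpa [rev, this] using hcL
      · have : w.len - 1 - (k - 1) = k0 := by omega
        simpa [rev, this] using hcR
    have := hind.1 k0 hc
    have hv : w.rev.vert k = w.vert k0 := rfl
    rw [hv, rev_first, rev_last]
    exact this.symm
  · intro k hk
    obtain ⟨⟨hk0, hklen⟩, hnc⟩ := hk
    simp only [rev_len] at hklen
    set k0 := w.len - k with hk0def
    have e1 : w.len - 1 - k = k0 - 1 := by omega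
    have e2 : w.len - 1 - (k - 1) = k0 := by omega
    have hnc0 : w.NonColliderAt k0 := by
      refine ⟨⟨by omega, by omega⟩, ?_⟩
      intro ⟨a, b⟩
      exact hnc ⟨by simpa [rev, e2] using b, by simpa [rev, e1] using a⟩
    have hcond := hind.2 k0 hnc0
    constructor
    · intro ⟨a, b⟩
      have a' : w.intoR k0 = true := by simpa [rev, e2] using a
      have b' : w.intoL k0 = false := by simpa [rev, e2] using b
      have hgoal := hcond.2 ⟨b', a'⟩
      have v1 : w.rev.vert k = w.vert k0 := rfl
      have v2 : w.rev.vert (k-1) = w.vert (k0+1) := by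
        have : w.len - (k-1) = k0 + 1 := by omega
        simp [rev, this]
      rw [v1, v2]; exact hgoal
    · intro ⟨a, b⟩
      have a' : w.intoR (k0-1) = false := by simpa [rev, e1] using a
      have b' : w.intoL (k0-1) = true := by simpa [rev, e1] using b
      have hgoal := hcond.1 ⟨b', a'⟩
      have v1 : w.rev.vert k = w.vert k0 := rfl
      have v2 : w.rev.vert (k+1) = w.vert (k0-1) := by
        have : w.len - (k+1) = k0 - 1 := by omega
        simp [rev, this]
      rw [v1, v2]; exact hgoal

end Walk

end Aux
section Aux2
variable {G : DMG V} {w w1 w2 : Walk V}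
namespace Walk

lemma rev_intoFirst (h : w.IntoLast) : w.rev.IntoFirst := by
  refine ⟨by simpa [rev] using h.1, ?_⟩
  simpa [rev] using h.2

lemma rev_intoLast (h : w.IntoFirst) : w.rev.IntoLast := by
  refine ⟨by simpa [rev] using h.1, ?_⟩
  have : w.len - 1 - (w.rev.len - 1) = 0 := by
    have := h.1; simp only [rev_len]; omega
  simpa [rev, this] using h.2

/-! #### Dropping a prefix -/

/-- The walk obtained by dropping the first `c` edges. -/
def drop (w : Walk V) (c : ℕ) : Walk V where
  len := w.len - c
  vert := fun m => w.vert (c + m)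
  intoL := fun m => w.intoL (c + m)
  intoR := fun m => w.intoR (c + m)

@[simp] lemma drop_len (c : ℕ) : (w.drop c).len = w.len - c := rfl
@[simp] lemma drop_first (c : ℕ) : (w.drop c).first = w.vert c := by simp [drop, first]
lemma drop_last {c : ℕ} (hc : c ≤ w.len) : (w.drop c).last = w.last := by
  have : c + (w.len - c) = w.len := by omega
  simp [drop, last, this]

lemma drop_valid (hv : w.ValidOn G) (c : ℕ) : (w.drop c).ValidOn G := by
  intro k hk
  simp only [drop_len] at hk
  have := hv (c + k) (by omega)
  have e : c + (k + 1) = (c + k) + 1 := by omega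
  simpa [drop, e] using this

lemma drop_intoLast {c : ℕ} (hc : c < w.len) (h : w.IntoLast) : (w.drop c).IntoLast := by
  refine ⟨by simp; omega, ?_⟩
  have e : c + (w.len - c - 1) = w.len - 1 := by omega
  simpa [drop, e] using h.2

lemma drop_inducing {c : ℕ} (hc : c ≤ w.len) (hfc : G.Anc w.first (w.vert c))
    (hind : w.Inducing G) : (w.drop c).Inducing G := by
  constructor
  · intro k hk
    obtain ⟨⟨hk0, hklen⟩, hcR, hcL⟩ := hk
    simp only [drop_len] at hklen
    have e : c + (k - 1) = (c + k) - 1 := by omega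
    have hcol : w.ColliderAt (c + k) := by
      refine ⟨⟨by omega, by omega⟩, by simpa [drop, e] using hcR, by simpa [drop] using hcL⟩
    rcases hind.1 _ hcol with h | h
    · exact Or.inl (anc_trans h hfc)
    · rw [drop_last hc]; exact Or.inr h
  · intro k hk
    obtain ⟨⟨hk0, hklen⟩, hnc⟩ := hk
    simp only [drop_len] at hklen
    have e : c + (k - 1) = (c + k) - 1 := by omega
    have hnc0 : w.NonColliderAt (c + k) := by
      refine ⟨⟨by omega, by omega⟩, fun ⟨a, b⟩ => hnc ⟨by simpa [drop, e] using a,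
        by simpa [drop] using b⟩⟩
    have hcond := hind.2 _ hnc0
    constructor
    · intro ⟨a, b⟩
      have := hcond.1 ⟨by simpa [drop, e] using a, by simpa [drop, e] using b⟩
      have v : c + (k - 1) = (c + k) - 1 := e
      simpa [drop, v] using this
    · intro ⟨a, b⟩
      have := hcond.2 ⟨by simpa [drop] using a, by simpa [drop] using b⟩
      have v : c + (k + 1) = (c + k) + 1 := by omega
      simpa [drop, v] using this

/-! #### Appending -/

/-- Concatenation of two walks (meaningful when `w1.last = w2.first`). -/
def append (w1 w2 : Walk V) : Walk V where
  len := w1.len + w2.len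
  vert := fun m => if m < w1.len then w1.vert m else w2.vert (m - w1.len)
  intoL := fun m => if m < w1.len then w1.intoL m else w2.intoL (m - w1.len)
  intoR := fun m => if m < w1.len then w1.intoR m else w2.intoR (m - w1.len)

@[simp] lemma append_len : (w1.append w2).len = w1.len + w2.len := rfl

lemma append_vert_le (hj : w1.last = w2.first) {m : ℕ} (hm : m ≤ w1.len) :
    (w1.append w2).vert m = w1.vert m := by
  rcases lt_or_eq_of_le hm with h | h
  · simp [append, h]
  · subst h
    simp [append, first, last] at hj ⊢
    exact hj.symm

lemma append_vert_ge (hj : w1.last = w2.first) {m : ℕ} (hm : w1.len ≤ m) :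
    (w1.append w2).vert m = w2.vert (m - w1.len) := by
  rcases lt_or_eq_of_le hm with h | h
  · simp [append, Nat.not_lt.mpr (le_of_lt h)]
  · subst h
    simp [append]

@[simp] lemma append_first (hj : w1.last = w2.first) : (w1.append w2).first = w1.first := by
  simpa [first] using append_vert_le hj (Nat.zero_le _)

@[simp] lemma append_last (hj : w1.last = w2.first) : (w1.append w2).last = w2.last := by
  have := append_vert_ge (w1 := w1) (w2 := w2) hj (m := w1.len + w2.len) (by omega)
  simp only [last, append_len, this]
  congr 1
  omega

lemma append_valid (hj : w1.last = w2.first) (h1 : w1.ValidOn G) (h2 : w2.ValidOn G) :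
    (w1.append w2).ValidOn G := by
  intro k hk
  simp only [append_len] at hk
  by_cases h : k < w1.len
  · have v1 : (w1.append w2).vert k = w1.vert k := append_vert_le hj (by omega)
    have v2 : (w1.append w2).vert (k+1) = w1.vert (k+1) := append_vert_le hj (by omega)
    have e1 : (w1.append w2).intoL k = w1.intoL k := by simp [append, h]
    have e2 : (w1.append w2).intoR k = w1.intoR k := by simp [append, h]
    rw [v1, v2, e1, e2]
    exact h1 k h
  · push_neg at h
    have v1 : (w1.append w2).vert k = w2.vert (k - w1.len) := append_vert_ge hj h
    have v2 : (w1.append w2).vert (k+1) = w2.vert ((k - w1.len)+1) := by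
      rw [append_vert_ge hj (by omega)]
      congr 1
      omega
    have e1 : (w1.append w2).intoL k = w2.intoL (k - w1.len) := by
      simp [append, Nat.not_lt.mpr h]
    have e2 : (w1.append w2).intoR k = w2.intoR (k - w1.len) := by
      simp [append, Nat.not_lt.mpr h]
    rw [v1, v2, e1, e2]
    exact h2 _ (by omega)

lemma append_intoFirst (h1 : 0 < w1.len) (h : w1.IntoFirst) : (w1.append w2).IntoFirst := by
  refine ⟨by simp; omega, ?_⟩
  simpa [append, h1] using h.2

lemma append_intoLast (h2 : 0 < w2.len) (h : w2.IntoLast) : (w1.append w2).IntoLast := by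
  refine ⟨by simp; omega, ?_⟩
  have e : w1.len + w2.len - 1 - w1.len = w2.len - 1 := by omega
  have hn : ¬ (w1.len + w2.len - 1 < w1.len) := by omega
  simpa [append, hn, e] using h.2

end Walk
end Aux2
section Aux3
variable {G : DMG V} {w w1 w2 : Walk V}
namespace Walk

lemma append_inducing (hj : w1.last = w2.first)
    (h1 : w1.Inducing G) (h2 : w2.Inducing G)
    (hmid : G.Anc w1.last w1.first ∨ G.Anc w1.last w2.last)
    (hL : 0 < w1.len → w1.intoR (w1.len - 1) = false →
      G.Scc w1.last (w1.vert (w1.len - 1)))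
    (hR : 0 < w2.len → w2.intoL 0 = false → G.Scc w2.first (w2.vert 1)) :
    (w1.append w2).Inducing G := by
  have eL : ∀ m, m < w1.len → (w1.append w2).intoL m = w1.intoL m := by
    intro m hm; simp [append, hm]
  have eR : ∀ m, m < w1.len → (w1.append w2).intoR m = w1.intoR m := by
    intro m hm; simp [append, hm]
  have fL : ∀ m, w1.len ≤ m → (w1.append w2).intoL m = w2.intoL (m - w1.len) := by
    intro m hm; simp [append, Nat.not_lt.mpr hm]
  have fR : ∀ m, w1.len ≤ m → (w1.append w2).intoR m = w2.intoR (m - w1.len) := by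
    intro m hm; simp [append, Nat.not_lt.mpr hm]
  have hfst : (w1.append w2).first = w1.first := append_first hj
  have hlst : (w1.append w2).last = w2.last := append_last hj
  have transfer : ∀ v, G.Anc v w1.last →
      G.Anc v w1.first ∨ G.Anc v w2.last := by
    intro v hv
    rcases hmid with h | h
    · exact Or.inl (anc_trans hv h)
    · exact Or.inr (anc_trans hv h)
  constructor
  · intro m hm
    obtain ⟨⟨hm0, hmlen⟩, hcR, hcL⟩ := hm
    simp only [append_len] at hmlen
    rw [hfst, hlst]
    rcases Nat.lt_trichotomy m w1.len with h | h | h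
    · rw [eR _ (by omega)] at hcR
      rw [eL _ (by omega)] at hcL
      have hcol : w1.ColliderAt m := ⟨⟨hm0, h⟩, hcR, hcL⟩
      rw [append_vert_le hj (by omega)]
      rcases h1.1 m hcol with hh | hh
      · exact Or.inl hh
      · exact transfer _ hh
    · subst h
      rw [append_vert_le hj (le_refl _)]
      exact transfer _ Relation.ReflTransGen.refl
    · rw [fR _ (by omega)] at hcR
      rw [fL _ (by omega)] at hcL
      have em : m - 1 - w1.len = (m - w1.len) - 1 := by omega
      rw [em] at hcR
      have hcol : w2.ColliderAt (m - w1.len) := ⟨⟨by omega, by omega⟩, hcR, hcL⟩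
      rw [append_vert_ge hj (by omega)]
      rcases h2.1 _ hcol with hh | hh
      · rw [← hj] at hh
        exact transfer _ hh
      · exact Or.inr hh
  · intro m hm
    obtain ⟨⟨hm0, hmlen⟩, hnc⟩ := hm
    simp only [append_len] at hmlen
    rcases Nat.lt_trichotomy m w1.len with h | h | h
    · have g1 := eL _ h
      have g2 := eR _ h
      have g3 := eL _ (show m - 1 < w1.len by omega)
      have g4 := eR _ (show m - 1 < w1.len by omega)
      have hnc1 : w1.NonColliderAt m := ⟨⟨hm0, h⟩, fun ⟨a, b⟩ => hnc ⟨by rw [g4]; exact a,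
        by rw [g1]; exact b⟩⟩
      have hcond := h1.2 m hnc1
      constructor
      · intro ⟨a, b⟩
        rw [g3] at a; rw [g4] at b
        rw [append_vert_le hj (by omega), append_vert_le hj (by omega)]
        exact hcond.1 ⟨a, b⟩
      · intro ⟨a, b⟩
        rw [g1] at a; rw [g2] at b
        rw [append_vert_le hj (by omega), append_vert_le hj (by omega)]
        exact hcond.2 ⟨a, b⟩
    · subst h
      have g3 := eL _ (show w1.len - 1 < w1.len by omega)
      have g4 := eR _ (show w1.len - 1 < w1.len by omega)
      have g1 := fL _ (le_refl w1.len)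
      have g2 := fR _ (le_refl w1.len)
      simp only [Nat.sub_self] at g1 g2
      constructor
      · intro ⟨a, b⟩
        rw [g3] at a; rw [g4] at b
        rw [append_vert_le hj (le_refl _), append_vert_le hj (by omega)]
        have := hL (by omega) b
        simpa [last] using this
      · intro ⟨a, b⟩
        rw [g1] at a
        rw [append_vert_le hj (le_refl _), append_vert_ge hj (by omega)]
        have := hR (by omega) a
        have e1 : w1.vert w1.len = w2.first := by simpa [last] using hj
        have e2 : w1.len + 1 - w1.len = 1 := by omega
        rw [e1, e2]
        exact this
    · have g1 := fL _ (show w1.len ≤ m by omega)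
      have g2 := fR _ (show w1.len ≤ m by omega)
      have g3 := fL _ (show w1.len ≤ m - 1 by omega)
      have g4 := fR _ (show w1.len ≤ m - 1 by omega)
      have em : m - 1 - w1.len = (m - w1.len) - 1 := by omega
      rw [em] at g3 g4
      have hnc2 : w2.NonColliderAt (m - w1.len) := ⟨⟨by omega, by omega⟩,
        fun ⟨a, b⟩ => hnc ⟨by rw [g4]; exact a, by rw [g1]; exact b⟩⟩
      have hcond := h2.2 _ hnc2
      have vm : (w1.append w2).vert m = w2.vert (m - w1.len) := append_vert_ge hj (by omega)
      have vm1 : (w1.append w2).vert (m+1) = w2.vert ((m - w1.len)+1) := by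
        rw [append_vert_ge hj (by omega)]; congr 1; omega
      have vm2 : (w1.append w2).vert (m-1) = w2.vert ((m - w1.len)-1) := by
        have e : m - 1 - w1.len = m - w1.len - 1 := by omega
        rw [append_vert_ge hj (by omega), e]
      constructor
      · intro ⟨a, b⟩
        rw [g3] at a; rw [g4] at b
        rw [vm, vm2]
        exact hcond.1 ⟨a, b⟩
      · intro ⟨a, b⟩
        rw [g1] at a; rw [g2] at b
        rw [vm, vm1]
        exact hcond.2 ⟨a, b⟩

end Walk
end Aux3
section Aux4
variable {G : DMG V} {w : Walk V}
namespace Walk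

/-- Chain lemma: starting at a tail, follow directed edges until the range end or
the first collider. -/
lemma chain (hv : w.ValidOn G) {s e : ℕ} (hse : s < e) (he : e ≤ w.len)
    (hs : w.intoL s = false) :
    (G.Anc (w.vert s) (w.vert e) ∧ w.intoR (e-1) = true) ∨
    (∃ c, s < c ∧ c < e ∧ w.ColliderAt c ∧ G.Anc (w.vert s) (w.vert c)) := by
  have key : ∀ d s, s + d = e → s < e → w.intoL s = false →
      (G.Anc (w.vert s) (w.vert e) ∧ w.intoR (e-1) = true) ∨
      (∃ c, s < c ∧ c < e ∧ w.ColliderAt c ∧ G.Anc (w.vert s) (w.vert c)) := by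
    intro d
    induction d with
    | zero => intro s hd hlt _; omega
    | succ d ih =>
      intro s hd hlt hsL
      have hslen : s < w.len := by omega
      obtain ⟨hsR, hdir⟩ := no_tail_tail hv hslen hsL
      have hstep : G.Anc (w.vert s) (w.vert (s+1)) := Relation.ReflTransGen.single hdir
      rcases Nat.eq_or_lt_of_le (show s + 1 ≤ e by omega) with h | h
      · left
        constructor
        · rw [← h]; exact hstep
        · have : e - 1 = s := by omega
          rw [this]; exact hsR
      · by_cases hc : w.intoL (s+1) = true
        · right
          exact ⟨s+1, by omega, h, ⟨⟨by omega, by omega⟩, by simpa using hsR, hc⟩, hstep⟩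
        · have hc' : w.intoL (s+1) = false := by simpa using hc
          rcases ih (s+1) (by omega) h hc' with ⟨ha, hb⟩ | ⟨c, hc1, hc2, hc3, hc4⟩
          · exact Or.inl ⟨anc_trans hstep ha, hb⟩
          · exact Or.inr ⟨c, by omega, hc2, hc3, anc_trans hstep hc4⟩
  exact key (e - s) s (by omega) hse hs

/-- If a walk is not into its first node and its first node is not an ancestor of
its last node, there is a collider in the same strongly connected component as the
first node. -/
lemma find_scc_collider (hv : w.ValidOn G) (hind : w.Inducing G) (hlen : 0 < w.len)
    (hnf : w.intoL 0 = false) (hna : ¬ G.Anc w.first w.last) :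
    ∃ c, w.ColliderAt c ∧ G.Scc w.first (w.vert c) := by
  rcases chain hv hlen (le_refl _) hnf with ⟨ha, _⟩ | ⟨c, _, _, hc3, hc4⟩
  · exact absurd ha hna
  · refine ⟨c, hc3, hc4, ?_⟩
    rcases hind.1 c hc3 with h | h
    · exact h
    · exact absurd (anc_trans hc4 h) hna

end Walk

/-- Extract a finite directed path from ancestry. -/
lemma exists_dir_fun {a b : V} (h : G.Anc a b) :
    ∃ (n : ℕ) (f : ℕ → V), f 0 = a ∧ f n = b ∧ ∀ m, m < n → G.dir (f m) (f (m+1)) := by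
  induction h with
  | refl => exact ⟨0, fun _ => a, rfl, rfl, fun m hm => by omega⟩
  | @tail x y hab hbc ih =>
    obtain ⟨n, f, h0, hn, hstep⟩ := ih
    refine ⟨n+1, fun m => if m ≤ n then f m else y, by simp [h0], by simp, ?_⟩
    intro m hm
    rcases Nat.lt_or_ge m n with h | h
    · simpa [show m ≤ n by omega, show m + 1 ≤ n by omega] using hstep m h
    · have hmn : m = n := by omega
      subst hmn
      simpa [hn] using hbc

/-- Steps along a function give ancestry between any two of its points. -/
lemma anc_of_steps {n : ℕ} {f : ℕ → V} (hstep : ∀ m, m < n → G.dir (f m) (f (m+1))) :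
    ∀ a b, a ≤ b → b ≤ n → G.Anc (f a) (f b) := by
  intro a b hab hbn
  induction b with
  | zero =>
    have : a = 0 := by omega
    subst this; exact Relation.ReflTransGen.refl
  | succ b ih =>
    rcases Nat.eq_or_lt_of_le hab with h | h
    · subst h; exact Relation.ReflTransGen.refl
    · exact Relation.ReflTransGen.tail (ih (by omega) (by omega)) (hstep b (by omega))

end Aux4
section Aux5
variable {G : DMG V} {w : Walk V}
namespace Walk

/-- Replace the prefix of a walk up to a collider in the scc of the first node by a
directed path, making the walk into its first node. -/
lemma improve_front (hv : w.ValidOn G) (hind : w.Inducing G) {c : ℕ}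
    (hcol : w.ColliderAt c) (hscc : G.Scc w.first (w.vert c)) :
    ∃ w' : Walk V, w'.ValidOn G ∧ w'.first = w.first ∧ w'.last = w.last ∧
      w'.Inducing G ∧ w'.IntoFirst ∧ (w.IntoLast → w'.IntoLast) := by
  obtain ⟨⟨hc0, hclen⟩, hcR, hcL⟩ := hcol
  set z := w.vert c with hz
  have hdval : (w.drop c).ValidOn G := drop_valid hv c
  have hdfirst : (w.drop c).first = z := drop_first c
  have hdlast : (w.drop c).last = w.last := drop_last (by omega)
  have hdind : (w.drop c).Inducing G := drop_inducing (by omega) hscc.1 hind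
  have hdlen : 0 < (w.drop c).len := by simp; omega
  have hdL0 : (w.drop c).intoL 0 = true := by simpa [drop] using hcL
  have hdIF : (w.drop c).IntoFirst := ⟨hdlen, hdL0⟩
  have hdIL : w.IntoLast → (w.drop c).IntoLast := fun h => drop_intoLast (by omega) h
  by_cases hfz : w.first = z
  · exact ⟨w.drop c, hdval, by rw [hdfirst, hfz], hdlast, hdind, hdIF, hdIL⟩
  · obtain ⟨n, f, hf0, hfn, hstep⟩ := exists_dir_fun hscc.2
    have hn : 0 < n := by
      rcases Nat.eq_zero_or_pos n with h | h
      · subst h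
        exact absurd (hfn.symm.trans hf0) hfz
      · exact h
    have hsccf : ∀ m, m ≤ n → G.Scc (f m) w.first := by
      intro m hm
      constructor
      · rw [← hfn]; exact anc_of_steps hstep m n hm (le_refl _)
      · exact anc_trans hscc.1 (by rw [← hf0] at *; exact anc_of_steps hstep 0 m (by omega) hm)
    set dirw : Walk V := ⟨n, f, fun _ => false, fun _ => true⟩ with hdirw
    have hdirval : dirw.ValidOn G := by
      intro k hk
      exact Or.inl ⟨rfl, rfl, hstep k hk⟩
    set rdw := dirw.rev with hrdw
    have hrval : rdw.ValidOn G := rev_valid hdirval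
    have hrlen : rdw.len = n := rfl
    have hrvert : ∀ m, rdw.vert m = f (n - m) := fun m => rfl
    have hrL : ∀ m, rdw.intoL m = true := fun m => rfl
    have hrR : ∀ m, rdw.intoR m = false := fun m => rfl
    have hrfirst : rdw.first = w.first := by simp [first, hrvert, hfn]
    have hrlast : rdw.last = z := by simp [last, hrvert, hrlen, hf0]
    have hrind : rdw.Inducing G := by
      constructor
      · intro k hk
        exact absurd hk.2.1 (by simp [hrR])
      · intro k hk
        obtain ⟨⟨hk0, hklen⟩, _⟩ := hk
        rw [hrlen] at hklen
        constructor
        · intro _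
          rw [hrvert, hrvert]
          have h1 := hsccf (n - k) (by omega)
          have h2 := hsccf (n - (k-1)) (by omega)
          exact ⟨anc_trans h1.1 h2.2, anc_trans h2.1 h1.2⟩
        · intro ⟨a, _⟩
          rw [hrL] at a
          exact absurd a (by simp)
    have hj : rdw.last = (w.drop c).first := by rw [hrlast, hdfirst]
    refine ⟨rdw.append (w.drop c), append_valid hj hrval hdval, ?_, ?_, ?_, ?_, ?_⟩
    · rw [append_first hj, hrfirst]
    · rw [append_last hj, hdlast]
    · refine append_inducing hj hrind hdind ?_ ?_ ?_
      · exact Or.inl (by rw [hrlast, hrfirst]; exact hscc.2)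
      · intro _ _
        rw [hrlast, hrvert]
        have h1 := hsccf 0 (by omega)
        have h2 := hsccf (n - (rdw.len - 1)) (by omega)
        rw [← hf0]
        exact ⟨anc_trans h1.1 h2.2, anc_trans h2.1 h1.2⟩
      · intro _ habs
        rw [hdL0] at habs
        exact absurd habs (by simp)
    · exact append_intoFirst (by rw [hrlen]; omega) ⟨by rw [hrlen]; omega, hrL 0⟩
    · intro h
      exact append_intoLast hdlen (hdIL h)

end Walk
end Aux5
section Aux6
variable {G : DMG V} {w : Walk V}
namespace Walk

/-- Remove the closed subwalk between positions `a` and `b` (where `vert a = vert b`). -/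
def splice (w : Walk V) (a b : ℕ) : Walk V where
  len := w.len - (b - a)
  vert := fun m => if m ≤ a then w.vert m else w.vert (m + (b - a))
  intoL := fun m => if m < a then w.intoL m else w.intoL (m + (b - a))
  intoR := fun m => if m < a then w.intoR m else w.intoR (m + (b - a))

variable {a b : ℕ}

@[simp] lemma splice_len : (w.splice a b).len = w.len - (b - a) := rfl

lemma splice_vert_le (hm : a ≤ a) {m : ℕ} (h : m ≤ a) : (w.splice a b).vert m = w.vert m := by
  simp [splice, h]

lemma splice_vert_ge (hba : a ≤ b) (hab : w.vert a = w.vert b) {m : ℕ} (h : a ≤ m) :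
    (w.splice a b).vert m = w.vert (m + (b - a)) := by
  rcases Nat.eq_or_lt_of_le h with h' | h'
  · subst h'
    have e : a + (b - a) = b := by omega
    simp [splice, hab, e]
  · simp [splice, Nat.not_le.mpr h']

lemma splice_first : (w.splice a b).first = w.first := by simp [splice, first]

lemma splice_last (ha : a < b) (hb : b ≤ w.len) (hab : w.vert a = w.vert b) :
    (w.splice a b).last = w.last := by
  have h1 : a ≤ w.len - (b - a) := by omega
  have := splice_vert_ge (w := w) (a := a) (b := b) (by omega) hab h1
  simp only [last, splice_len, this]
  congr 1
  omega

lemma splice_eL {m : ℕ} (h : m < a) : (w.splice a b).intoL m = w.intoL m := by simp [splice, h]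
lemma splice_eR {m : ℕ} (h : m < a) : (w.splice a b).intoR m = w.intoR m := by simp [splice, h]
lemma splice_fL {m : ℕ} (h : a ≤ m) : (w.splice a b).intoL m = w.intoL (m + (b - a)) := by
  simp [splice, Nat.not_lt.mpr h]
lemma splice_fR {m : ℕ} (h : a ≤ m) : (w.splice a b).intoR m = w.intoR (m + (b - a)) := by
  simp [splice, Nat.not_lt.mpr h]

lemma splice_valid (hv : w.ValidOn G) (ha : a < b) (hb : b ≤ w.len)
    (hab : w.vert a = w.vert b) : (w.splice a b).ValidOn G := by
  intro k hk
  simp only [splice_len] at hk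
  rcases Nat.lt_or_ge k a with h | h
  · rw [splice_eL h, splice_eR h, splice_vert_le (le_refl _) (by omega),
      splice_vert_le (le_refl _) (by omega)]
    exact hv k (by omega)
  · rw [splice_fL h, splice_fR h, splice_vert_ge (by omega) hab h, splice_vert_ge (by omega) hab (by omega)]
    have e : k + 1 + (b - a) = (k + (b - a)) + 1 := by omega
    rw [e]
    exact hv _ (by omega)

lemma splice_inducing (hv : w.ValidOn G) (hind : w.Inducing G) (ha : a < b)
    (hb : b ≤ w.len) (hab : w.vert a = w.vert b) : (w.splice a b).Inducing G := by
  have hfst : (w.splice a b).first = w.first := splice_first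
  have hlst : (w.splice a b).last = w.last := splice_last ha hb hab
  constructor
  · intro m hm
    obtain ⟨⟨hm0, hmlen⟩, hcR, hcL⟩ := hm
    simp only [splice_len] at hmlen
    rw [hfst, hlst]
    rcases Nat.lt_trichotomy a m with h | h | h
    · rw [splice_fR (by omega)] at hcR
      rw [splice_fL (by omega)] at hcL
      have e : m - 1 + (b - a) = (m + (b - a)) - 1 := by omega
      rw [e] at hcR
      rw [splice_vert_ge (by omega) hab (by omega)]
      exact hind.1 _ ⟨⟨by omega, by omega⟩, hcR, hcL⟩
    · subst h
      rw [splice_eR (by omega)] at hcR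
      rw [splice_fL (le_refl _)] at hcL
      have eab : a + (b - a) = b := by omega
      rw [eab] at hcL
      rw [splice_vert_le (le_refl _) (le_refl _)]
      by_cases hLa : w.intoL a = true
      · exact hind.1 a ⟨⟨hm0, by omega⟩, hcR, hLa⟩
      · have hLa' : w.intoL a = false := by simpa using hLa
        by_cases hRb : w.intoR (b - 1) = true
        · have := hind.1 b ⟨⟨by omega, by omega⟩, hRb, hcL⟩
          rw [← hab] at this
          exact this
        · rcases chain hv ha hb hLa' with ⟨_, hh⟩ | ⟨c, _, _, hc3, hc4⟩
          · exact absurd hh hRb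
          · rcases hind.1 c hc3 with hh | hh
            · exact Or.inl (anc_trans hc4 hh)
            · exact Or.inr (anc_trans hc4 hh)
    · rw [splice_eR (by omega)] at hcR
      rw [splice_eL h] at hcL
      rw [splice_vert_le (le_refl _) (by omega)]
      exact hind.1 m ⟨⟨hm0, by omega⟩, hcR, hcL⟩
  · intro m hm
    obtain ⟨⟨hm0, hmlen⟩, hnc⟩ := hm
    simp only [splice_len] at hmlen
    rcases Nat.lt_trichotomy a m with h | h | h
    · have g1 := splice_fL (w := w) (a := a) (b := b) (m := m) (by omega)
      have g2 := splice_fR (w := w) (a := a) (b := b) (m := m) (by omega)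
      have g3 := splice_fL (w := w) (a := a) (b := b) (m := m - 1) (by omega)
      have g4 := splice_fR (w := w) (a := a) (b := b) (m := m - 1) (by omega)
      have e : m - 1 + (b - a) = (m + (b - a)) - 1 := by omega
      rw [e] at g3 g4
      have hnc0 : w.NonColliderAt (m + (b - a)) := ⟨⟨by omega, by omega⟩,
        fun ⟨x, y⟩ => hnc ⟨by rw [g4]; exact x, by rw [g1]; exact y⟩⟩
      have hcond := hind.2 _ hnc0
      constructor
      · intro ⟨x, y⟩
        rw [g3] at x; rw [g4] at y
        rw [splice_vert_ge (by omega) hab (by omega), splice_vert_ge (by omega) hab (by omega)]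
        have e2 : m - 1 + (b - a) = (m + (b - a)) - 1 := e
        rw [e2]
        exact hcond.1 ⟨x, y⟩
      · intro ⟨x, y⟩
        rw [g1] at x; rw [g2] at y
        rw [splice_vert_ge (by omega) hab (by omega), splice_vert_ge (by omega) hab (by omega)]
        have e2 : m + 1 + (b - a) = (m + (b - a)) + 1 := by omega
        rw [e2]
        exact hcond.2 ⟨x, y⟩
    · subst h
      have g3 := splice_eL (w := w) (a := a) (b := b) (m := a - 1) (by omega)
      have g4 := splice_eR (w := w) (a := a) (b := b) (m := a - 1) (by omega)
      have g1 := splice_fL (w := w) (a := a) (b := b) (m := a) (le_refl _)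
      have g2 := splice_fR (w := w) (a := a) (b := b) (m := a) (le_refl _)
      have eab : a + (b - a) = b := by omega
      rw [eab] at g1 g2
      constructor
      · intro ⟨x, y⟩
        rw [g3] at x; rw [g4] at y
        have hnc0 : w.NonColliderAt a := ⟨⟨hm0, by omega⟩, fun ⟨u, _⟩ => by
          rw [y] at u; exact absurd u (by simp)⟩
        have := (hind.2 a hnc0).1 ⟨x, y⟩
        rw [splice_vert_le (le_refl _) (le_refl _), splice_vert_le (le_refl _) (by omega)]
        exact this
      · intro ⟨x, y⟩
        rw [g1] at x; rw [g2] at y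
        have hblen : b < w.len := by omega
        have hnc0 : w.NonColliderAt b := ⟨⟨by omega, hblen⟩, fun ⟨_, u⟩ => by
          rw [x] at u; exact absurd u (by simp)⟩
        have := (hind.2 b hnc0).2 ⟨x, y⟩
        rw [← hab] at this
        rw [splice_vert_le (le_refl _) (le_refl _), splice_vert_ge (by omega) hab (by omega)]
        have e : a + 1 + (b - a) = b + 1 := by omega
        rw [e]
        exact this
    · have g1 := splice_eL (w := w) (a := a) (b := b) (m := m) h
      have g2 := splice_eR (w := w) (a := a) (b := b) (m := m) h
      have g3 := splice_eL (w := w) (a := a) (b := b) (m := m - 1) (by omega)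
      have g4 := splice_eR (w := w) (a := a) (b := b) (m := m - 1) (by omega)
      have hnc0 : w.NonColliderAt m := ⟨⟨hm0, by omega⟩,
        fun ⟨x, y⟩ => hnc ⟨by rw [g4]; exact x, by rw [g1]; exact y⟩⟩
      have hcond := hind.2 m hnc0
      constructor
      · intro ⟨x, y⟩
        rw [g3] at x; rw [g4] at y
        rw [splice_vert_le (le_refl _) (by omega), splice_vert_le (le_refl _) (by omega)]
        exact hcond.1 ⟨x, y⟩
      · intro ⟨x, y⟩
        rw [g1] at x; rw [g2] at y
        rw [splice_vert_le (le_refl _) (by omega), splice_vert_le (le_refl _) (by omega)]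
        exact hcond.2 ⟨x, y⟩

/-- Every inducing walk yields an inducing path with the same endpoints. -/
lemma exists_inducing_path (hv : w.ValidOn G) (hind : w.Inducing G) :
    ∃ w' : Walk V, w'.ValidOn G ∧ w'.first = w.first ∧ w'.last = w.last ∧
      w'.IsPath ∧ w'.Inducing G := by
  generalize hlen : w.len = n at *
  induction n using Nat.strong_induction_on generalizing w with
  | _ n ih =>
    by_cases hp : w.IsPath
    · exact ⟨w, hv, rfl, rfl, hp, hind⟩
    · simp only [IsPath, not_forall] at hp
      obtain ⟨x, hx, y, hy, hxy, hne⟩ := hp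
      have hwlog : ∃ a b, a < b ∧ b ≤ w.len ∧ w.vert a = w.vert b := by
        rcases Nat.lt_trichotomy x y with h | h | h
        · exact ⟨x, y, h, hy, hxy⟩
        · exact absurd h hne
        · exact ⟨y, x, h, hx, hxy.symm⟩
      obtain ⟨a, b, hab1, hab2, hab3⟩ := hwlog
      have hlen' : (w.splice a b).len < n := by
        simp only [splice_len, hlen]
        omega
      obtain ⟨w', c1, c2, c3, c4, c5⟩ := ih (w.splice a b).len hlen'
        (splice_valid hv hab1 (by omega) hab3)
        (splice_inducing hv hind hab1 (by omega) hab3) rfl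
      exact ⟨w', c1, by rw [c2, splice_first], by rw [c3, splice_last hab1 (by omega) hab3],
        c4, c5⟩

end Walk
end Aux6
section Aux7
variable {G : DMG V}

/-- If `x *→ y` in `P` and `P` contains `G`, there is an inducing walk between `x`
and `y` in `G` that is into `y`. -/
lemma arrow_into (P : DPAG V) (G : DMG V) (hPG : P.Contains G) {x y : V} (hxy : x ≠ y)
    (ha : P.ArrowAt x y) :
    ∃ w : Walk V, w.ValidOn G ∧ w.first = x ∧ w.last = y ∧ w.Inducing G ∧ w.IntoLast := by
  have hnanc : ¬ G.Anc y x := hPG.2.1 x y ha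
  obtain ⟨w, hv, hf, hl, _, hind⟩ := (hPG.1 x y hxy).mp ha.1
  have hlen : 0 < w.len := by
    rcases Nat.eq_zero_or_pos w.len with h | h
    · exfalso; apply hxy; rw [← hf, ← hl, Walk.first, Walk.last, h]
    · exact h
  by_cases hIL : w.intoR (w.len - 1) = true
  · exact ⟨w, hv, hf, hl, hind, hlen, hIL⟩
  · have hrv : w.rev.ValidOn G := Walk.rev_valid hv
    have hrind : w.rev.Inducing G := Walk.rev_inducing hind
    have hrfirst : w.rev.first = y := by rw [Walk.rev_first, hl]
    have hrlast : w.rev.last = x := by rw [Walk.rev_last, hf]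
    have hrlen : 0 < w.rev.len := hlen
    have hIL' : w.intoR (w.len - 1) = false := by simpa using hIL
    have hr0 : w.rev.intoL 0 = false := by
      show w.intoR (w.len - 1 - 0) = false
      simpa using hIL'
    have hna : ¬ G.Anc w.rev.first w.rev.last := by rw [hrfirst, hrlast]; exact hnanc
    obtain ⟨c, hc, hscc⟩ := Walk.find_scc_collider hrv hrind hrlen hr0 hna
    obtain ⟨r', v', f', l', ind', IF', _⟩ := Walk.improve_front hrv hrind hc hscc
    refine ⟨r'.rev, Walk.rev_valid v', ?_, ?_, Walk.rev_inducing ind', Walk.rev_intoLast IF'⟩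
    · rw [Walk.rev_first, l', hrlast]
    · rw [Walk.rev_last, f', hrfirst]

/-- If `x *→ y` and `y *→ x` (i.e. `x ↔ y`) in `P` and `P` contains `G`, there is an
inducing walk between `x` and `y` in `G` that is into both `x` and `y`. -/
lemma arrow_both (P : DPAG V) (G : DMG V) (hPG : P.Contains G) {x y : V} (hxy : x ≠ y)
    (haxy : P.ArrowAt x y) (hayx : P.ArrowAt y x) :
    ∃ w : Walk V, w.ValidOn G ∧ w.first = x ∧ w.last = y ∧ w.Inducing G ∧
      w.IntoFirst ∧ w.IntoLast := by
  obtain ⟨w, hv, hf, hl, hind, hIL⟩ := arrow_into P G hPG hxy haxy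
  by_cases hIF : w.intoL 0 = true
  · exact ⟨w, hv, hf, hl, hind, ⟨hIL.1, hIF⟩, hIL⟩
  · have hnax : ¬ G.Anc x y := hPG.2.1 y x hayx
    have hna : ¬ G.Anc w.first w.last := by rw [hf, hl]; exact hnax
    obtain ⟨c, hc, hscc⟩ := Walk.find_scc_collider hv hind hIL.1 (by simpa using hIF) hna
    obtain ⟨w', v', f', l', ind', IF', pres⟩ := Walk.improve_front hv hind hc hscc
    exact ⟨w', v', f'.trans hf, l'.trans hl, ind', IF', pres hIL⟩

end Aux7
/-- if the directed edge `i → j` of a DPAG `P` is definitely visible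
in `P`, then for every DMG `G` contained in `P` there is no inducing walk between
`i` and `j` in `G` that is into `i`. -/
theorem statement9 (P : DPAG V) (i j : V) (h : P.DefinitelyVisible i j) :
    ∀ G : DMG V, P.Contains G →
      ¬ ∃ w : Walk V, w.ValidOn G ∧ w.first = i ∧ w.last = j ∧
        w.Inducing G ∧ w.IntoFirst := by
  obtain ⟨hdir, k, hkj, hcase⟩ := h
  intro G hPG
  rintro ⟨w0, hv0, hf0, hl0, hind0, hIF0⟩
  have hAncij : G.Anc i j := hPG.2.2 i j hdir
  have hmarkji : P.mark j i = Mark.tail := hdir.2.2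
  have finish : (k ≠ j) → (∃ w : Walk V, w.ValidOn G ∧ w.first = k ∧ w.last = j ∧
      w.Inducing G) → False := by
    rintro hkne ⟨w, hv, hf, hl, hind⟩
    obtain ⟨w', v', f', l', p', ind'⟩ := Walk.exists_inducing_path hv hind
    exact hkj ((hPG.1 k j hkne).mpr ⟨w', v', f'.trans hf, l'.trans hl, p', ind'⟩)
  rcases hcase with ⟨hadjki, hmarkki⟩ | ⟨n, p, hn, hp0, hpn, hinj, hadjp, hmarkn, hint⟩
  · -- simple case: k *→ i in P
    have hkne : k ≠ j := by
      intro hkeq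
      rw [hkeq, hmarkji] at hmarkki
      exact absurd hmarkki (by simp)
    have hki : k ≠ i := by
      intro hkeq
      rw [hkeq] at hadjki
      exact P.adj_irrefl i hadjki
    obtain ⟨u, uv, uf, ul, uind, uIL⟩ := arrow_into P G hPG hki ⟨hadjki, hmarkki⟩
    have hj : u.last = w0.first := by rw [ul, hf0]
    refine finish hkne ⟨u.append w0, Walk.append_valid hj uv hv0, ?_, ?_, ?_⟩
    · rw [Walk.append_first hj, uf]
    · rw [Walk.append_last hj, hl0]
    · refine Walk.append_inducing hj uind hind0 ?_ ?_ ?_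
      · refine Or.inr ?_
        rw [ul, hl0]
        exact hAncij
      · intro _ habs
        rw [uIL.2] at habs
        exact absurd habs (by simp)
      · intro _ habs
        rw [hIF0.2] at habs
        exact absurd habs (by simp)
  · -- collider path case
    have hkne : k ≠ j := by
      intro hkeq
      rcases Nat.lt_or_ge 1 n with h1 | h1
      · have := hint 1 (by omega) h1
        have h2 : P.mark (p 0) (p 1) = Mark.arrow := by
          simpa using this.1.1
        have h3 : P.mark j (p 1) = Mark.tail := this.2.2.2
        rw [hp0, hkeq] at h2
        rw [h2] at h3
        exact absurd h3 (by simp)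
      · have hn1 : n = 1 := by omega
        have : p (n - 1) = j := by rw [hn1]; simpa [hp0] using hkeq
        rw [this, hmarkji] at hmarkn
        exact absurd hmarkn (by simp)
    have claim : ∀ t m, m + t = n → ∃ w : Walk V, w.ValidOn G ∧ w.first = p m ∧
        w.last = j ∧ w.Inducing G ∧ (0 < m → w.IntoFirst) := by
      intro t
      induction t with
      | zero =>
        intro m hm
        have hmn : m = n := by omega
        subst hmn
        refine ⟨w0, hv0, by rw [hf0, hpn], hl0, hind0, fun _ => hIF0⟩
      | succ t ih =>
        intro m hm
        obtain ⟨W, Wv, Wf, Wl, Wind, WIF⟩ := ih (m+1) (by omega)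
        have WIF := WIF (by omega)
        have hmlt : m < n := by omega
        have hmarkR : P.mark (p m) (p (m+1)) = Mark.arrow := by
          rcases Nat.eq_or_lt_of_le (show m + 1 ≤ n by omega) with he | he
          · have e1 : p (n - 1) = p m := by rw [show n - 1 = m by omega]
            rw [show (m+1 : ℕ) = n from he, hpn, ← e1]
            exact hmarkn
          · have := (hint (m+1) (by omega) he).1.1
            simpa using this
        have hApm : P.ArrowAt (p m) (p (m+1)) := ⟨hadjp m hmlt, hmarkR⟩
        have hAncP : G.Anc (p (m+1)) j := by
          rcases Nat.eq_or_lt_of_le (show m + 1 ≤ n by omega) with he | he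
          · rw [show (m+1 : ℕ) = n from he, hpn]
            exact hAncij
          · exact hPG.2.2 _ _ (hint (m+1) (by omega) he).2
        have hpne : p m ≠ p (m+1) := by
          intro habs
          have := hinj m (by omega) (m+1) (by omega) habs
          omega
        have hu : ∃ u : Walk V, u.ValidOn G ∧ u.first = p m ∧ u.last = p (m+1) ∧
            u.Inducing G ∧ u.IntoLast ∧ (0 < m → u.IntoFirst) := by
          rcases Nat.eq_zero_or_pos m with hm0 | hm0
          · obtain ⟨u, a1, a2, a3, a4, a5⟩ := arrow_into P G hPG hpne hApm
            exact ⟨u, a1, a2, a3, a4, a5, fun habs => by omega⟩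
          · have hApm' : P.ArrowAt (p (m+1)) (p m) :=
              ⟨P.adj_symm _ _ (hadjp m hmlt), (hint m hm0 hmlt).1.2⟩
            obtain ⟨u, a1, a2, a3, a4, a5, a6⟩ := arrow_both P G hPG hpne hApm hApm'
            exact ⟨u, a1, a2, a3, a4, a6, fun _ => a5⟩
        obtain ⟨u, uv, uf, ul, uind, uIL, uIF⟩ := hu
        have hj : u.last = W.first := by rw [ul, Wf]
        refine ⟨u.append W, Walk.append_valid hj uv Wv, ?_, ?_, ?_, ?_⟩
        · rw [Walk.append_first hj, uf]
        · rw [Walk.append_last hj, Wl]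
        · refine Walk.append_inducing hj uind Wind ?_ ?_ ?_
          · refine Or.inr ?_
            rw [ul, Wl]
            exact hAncP
          · intro _ habs
            rw [uIL.2] at habs
            exact absurd habs (by simp)
          · intro _ habs
            rw [WIF.2] at habs
            exact absurd habs (by simp)
        · intro hm0
          exact Walk.append_intoFirst uIL.1 (uIF hm0)
    obtain ⟨w, wv, wf, wl, wind, _⟩ := claim n 0 (by omega)
    exact finish hkne ⟨w, wv, by rw [wf, hp0], wl, wind⟩
end CausalGraphs
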